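/- The number of lattice paths from (0,0) to (l,m) using horizontal steps (i,j)→(i+1,j), vertical steps (i,j)→(i,j+1), and diagonal steps (i,j)→(i+1,j+1) allowed only at points with i+j even, that contain exactly j diagonal steps, equals C(l+m-2j, l-j) · C(⌊(l+m)/2⌋, j). -/
import Mathlib


/-- Steps in the quiver: vertical `(i,j) → (i,j+1)`, horizontal `(i,j) → (i+1,j)`,
and diagonal `(i,j) → (i+1,j+1)`. -/
inductive Step : Type
  | H | V | D
deriving DecidableEq

/-- Move a point by one step. -/
def move : ℕ × ℕ → Step → ℕ × ℕ
  | p, .H => (p.1 + 1, p.2)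
  | p, .V => (p.1, p.2 + 1)
  | p, .D => (p.1 + 1, p.2 + 1)

/-- A list of steps is valid from a point `p` if every diagonal step starts at a
point `(i,j)` with `i + j` even. -/
def ValidFrom : ℕ × ℕ → List Step → Prop
  | _, [] => True
  | p, s :: rest => (s = Step.D → (p.1 + p.2) % 2 = 0) ∧ ValidFrom (move p s) rest

/-- Endpoint of a path starting at `p`. -/
def endpt (p : ℕ × ℕ) (L : List Step) : ℕ × ℕ := L.foldl move p

namespace StmtAux

instance : Finite Step :=
  Finite.of_injective (fun s => match s with | .H => (0 : Fin 3) | .V => 1 | .D => 2)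
    (by intro a b; cases a <;> cases b <;> simp)

lemma endpt_nil (p : ℕ × ℕ) : endpt p [] = p := rfl

lemma endpt_cons (p : ℕ × ℕ) (s : Step) (L : List Step) :
    endpt p (s :: L) = endpt (move p s) L := rfl

lemma endpt_bound (L : List Step) : ∀ p : ℕ × ℕ,
    p.1 ≤ (endpt p L).1 ∧ p.2 ≤ (endpt p L).2 ∧
      p.1 + p.2 + L.length ≤ (endpt p L).1 + (endpt p L).2 := by
  induction L with
  | nil => intro p; simp [endpt_nil]
  | cons s L ih =>
    intro p
    have h := ih (move p s)
    rw [endpt_cons]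
    cases s <;> simp [move] at h ⊢ <;> omega

lemma finite_subtype (P : List Step → Prop) (n : ℕ) (h : ∀ L, P L → L.length ≤ n) :
    Finite {L // P L} := by
  have hs : {L : List Step | P L} ⊆ {L | L.length ≤ n} := h
  exact ((List.finite_length_le Step n).subset hs).to_subtype

lemma card_split (P : List Step → Prop) (n : ℕ)
    (hlen : ∀ L, P L → L.length ≤ n) (hne : ∀ L, P L → L ≠ []) :
    Nat.card {L // P L} =
      Nat.card {r // P (Step.H :: r)} + Nat.card {r // P (Step.V :: r)}
        + Nat.card {r // P (Step.D :: r)} := by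
  have bnd : ∀ s : Step, ∀ r : List Step, P (s :: r) → r.length ≤ n := by
    intro s r h
    have := hlen _ h
    simp at this; omega
  have fH : Finite {r // P (Step.H :: r)} := finite_subtype _ n (bnd _)
  have fV : Finite {r // P (Step.V :: r)} := finite_subtype _ n (bnd _)
  have fD : Finite {r // P (Step.D :: r)} := finite_subtype _ n (bnd _)
  let g : {r // P (Step.H :: r)} ⊕ {r // P (Step.V :: r)} ⊕ {r // P (Step.D :: r)} →
      {L // P L} := fun x =>
    match x with
    | .inl ⟨r, h⟩ => ⟨Step.H :: r, h⟩
    | .inr (.inl ⟨r, h⟩) => ⟨Step.V :: r, h⟩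
    | .inr (.inr ⟨r, h⟩) => ⟨Step.D :: r, h⟩
  have hg : Function.Bijective g := by
    constructor
    · rintro (⟨r, h⟩ | ⟨r, h⟩ | ⟨r, h⟩) (⟨r', h'⟩ | ⟨r', h'⟩ | ⟨r', h'⟩) he <;>
        simp [g, Subtype.ext_iff] at he ⊢ <;> tauto
    · rintro ⟨L, hL⟩
      match L, hne L hL with
      | Step.H :: r, _ => exact ⟨.inl ⟨r, hL⟩, rfl⟩
      | Step.V :: r, _ => exact ⟨.inr (.inl ⟨r, hL⟩), rfl⟩
      | Step.D :: r, _ => exact ⟨.inr (.inr ⟨r, hL⟩), rfl⟩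
  rw [← Nat.card_eq_of_bijective g hg, Nat.card_sum, Nat.card_sum, add_assoc]

def G (e l m j : ℕ) : ℕ :=
  if l < j ∨ m < j then 0
  else Nat.choose (l + m - 2 * j) (l - j) * Nat.choose ((l + m - e) / 2) j

lemma G_zero {e l m j : ℕ} (h : l < j ∨ m < j) : G e l m j = 0 := if_pos h

lemma G_pos {e l m j : ℕ} (hl : j ≤ l) (hm : j ≤ m) :
    G e l m j = Nat.choose (l + m - 2 * j) (l - j) * Nat.choose ((l + m - e) / 2) j :=
  if_neg (by omega)

lemma G_eq (e l m j n a t : ℕ) (hl : j ≤ l) (hm : j ≤ m)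
    (h1 : l + m - 2 * j = n) (h2 : l - j = a) (h3 : (l + m - e) / 2 = t) :
    G e l m j = Nat.choose n a * Nat.choose t j := by
  subst h1; subst h2; subst h3; exact G_pos hl hm

lemma pascal1 (n a : ℕ) (hn : 0 < n) (ha : 0 < a) :
    Nat.choose n a = Nat.choose (n - 1) (a - 1) + Nat.choose (n - 1) a := by
  obtain ⟨n', rfl⟩ : ∃ n', n = n' + 1 := ⟨n - 1, by omega⟩
  obtain ⟨a', rfl⟩ : ∃ a', a = a' + 1 := ⟨a - 1, by omega⟩
  simp [Nat.choose_succ_succ]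

lemma pascal2 (t j : ℕ) (hj : 0 < j) :
    Nat.choose (t + 1) j = Nat.choose t j + Nat.choose t (j - 1) := by
  obtain ⟨k, rfl⟩ : ∃ k, j = k + 1 := ⟨j - 1, by omega⟩
  simp [Nat.choose_succ_succ, Nat.add_comm]

lemma G_rec (e l m j : ℕ) (he : e ≤ 1) (h0 : 0 < l + m) :
    G e l m j =
      (if 0 < l then G (1 - e) (l - 1) m j else 0) +
      (if 0 < m then G (1 - e) l (m - 1) j else 0) +
      (if e = 0 ∧ 0 < l ∧ 0 < m ∧ 0 < j then G e (l - 1) (m - 1) (j - 1) else 0) := by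
  by_cases hA : l < j ∨ m < j
  · have hL : G e l m j = 0 := G_zero hA
    have e1 : (if 0 < l then G (1 - e) (l - 1) m j else 0) = 0 := by
      split_ifs with h
      · exact G_zero (by omega)
      · rfl
    have e2 : (if 0 < m then G (1 - e) l (m - 1) j else 0) = 0 := by
      split_ifs with h
      · exact G_zero (by omega)
      · rfl
    have e3 : (if e = 0 ∧ 0 < l ∧ 0 < m ∧ 0 < j then G e (l - 1) (m - 1) (j - 1) else 0)
        = 0 := by
      split_ifs with h
      · exact G_zero (by omega)
      · rfl
    rw [hL, e1, e2, e3]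
  push_neg at hA
  obtain ⟨hjl, hjm⟩ := hA
  by_cases hj0 : j = 0
  · subst hj0
    rw [if_neg (show ¬(e = 0 ∧ 0 < l ∧ 0 < m ∧ 0 < 0) by omega)]
    have hL : G e l m 0 = Nat.choose (l + m) l * Nat.choose ((l + m - e) / 2) 0 :=
      G_eq e l m 0 (l + m) l _ (by omega) (by omega) (by omega) (by omega) rfl
    rcases Nat.eq_zero_or_pos l with hl | hl
    · subst hl
      have hV : G (1 - e) 0 (m - 1) 0
          = Nat.choose (m - 1) 0 * Nat.choose ((0 + (m - 1) - (1 - e)) / 2) 0 :=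
        G_eq _ _ _ _ _ _ _ (by omega) (by omega) (by omega) (by omega) rfl
      rw [if_neg (show ¬(0 < 0) by omega), if_pos (show 0 < m by omega), hL, hV]
      simp
    · rcases Nat.eq_zero_or_pos m with hm | hm
      · subst hm
        have hH : G (1 - e) (l - 1) 0 0
            = Nat.choose (l - 1) (l - 1) * Nat.choose ((l - 1 + 0 - (1 - e)) / 2) 0 :=
          G_eq _ _ _ _ _ _ _ (by omega) (by omega) (by omega) (by omega) rfl
        rw [if_pos hl, if_neg (show ¬(0 < 0) by omega), hL, hH]
        have h2 : l + 0 = l := by omega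
        rw [h2, Nat.choose_self, Nat.choose_self]
        simp
      · have hH : G (1 - e) (l - 1) m 0
            = Nat.choose (l + m - 1) (l - 1) * Nat.choose ((l - 1 + m - (1 - e)) / 2) 0 :=
          G_eq _ _ _ _ _ _ _ (by omega) (by omega) (by omega) (by omega) rfl
        have hV : G (1 - e) l (m - 1) 0
            = Nat.choose (l + m - 1) l * Nat.choose ((l + (m - 1) - (1 - e)) / 2) 0 :=
          G_eq _ _ _ _ _ _ _ (by omega) (by omega) (by omega) (by omega) rfl
        rw [if_pos hl, if_pos hm, hL, hH, hV, pascal1 (l + m) l (by omega) hl]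
        simp [Nat.choose_zero_right]
  have hj : 0 < j := by omega
  have hl1 : 0 < l := by omega
  have hm1 : 0 < m := by omega
  rw [if_pos hl1, if_pos hm1]
  interval_cases e
  · rw [if_pos ⟨rfl, hl1, hm1, hj⟩]
    set T := (l + m - 2) / 2 with hT
    rcases Nat.eq_or_lt_of_le hjl with hl | hl <;> rcases Nat.eq_or_lt_of_le hjm with hm | hm
    · have hL : G 0 l m j = Nat.choose 0 0 * Nat.choose (T + 1) j :=
        G_eq _ _ _ _ _ _ _ (by omega) (by omega) (by omega) (by omega) (by omega)
      have hH : G (1 - 0) (l - 1) m j = 0 := G_zero (by omega)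
      have hV : G (1 - 0) l (m - 1) j = 0 := G_zero (by omega)
      have hD : G 0 (l - 1) (m - 1) (j - 1) = Nat.choose 0 0 * Nat.choose T (j - 1) :=
        G_eq _ _ _ _ _ _ _ (by omega) (by omega) (by omega) (by omega) (by omega)
      have hz : Nat.choose T j = 0 := Nat.choose_eq_zero_of_lt (by omega)
      rw [hL, hH, hV, hD, pascal2 T j hj, hz]
      ring
    · have hL : G 0 l m j = Nat.choose (m - j) 0 * Nat.choose (T + 1) j :=
        G_eq _ _ _ _ _ _ _ (by omega) (by omega) (by omega) (by omega) (by omega)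
      have hH : G (1 - 0) (l - 1) m j = 0 := G_zero (by omega)
      have hV : G (1 - 0) l (m - 1) j = Nat.choose (m - 1 - j) 0 * Nat.choose T j :=
        G_eq _ _ _ _ _ _ _ (by omega) (by omega) (by omega) (by omega) (by omega)
      have hD : G 0 (l - 1) (m - 1) (j - 1)
          = Nat.choose (m - j) 0 * Nat.choose T (j - 1) :=
        G_eq _ _ _ _ _ _ _ (by omega) (by omega) (by omega) (by omega) (by omega)
      rw [hL, hH, hV, hD, pascal2 T j hj]
      simp only [Nat.choose_zero_right, one_mul, mul_one]
      ring
    · have hL : G 0 l m j = Nat.choose (l - j) (l - j) * Nat.choose (T + 1) j :=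
        G_eq _ _ _ _ _ _ _ (by omega) (by omega) (by omega) (by omega) (by omega)
      have hV : G (1 - 0) l (m - 1) j = 0 := G_zero (by omega)
      have hH : G (1 - 0) (l - 1) m j
          = Nat.choose (l - 1 - j) (l - 1 - j) * Nat.choose T j :=
        G_eq _ _ _ _ _ _ _ (by omega) (by omega) (by omega) (by omega) (by omega)
      have hD : G 0 (l - 1) (m - 1) (j - 1)
          = Nat.choose (l - j) (l - j) * Nat.choose T (j - 1) :=
        G_eq _ _ _ _ _ _ _ (by omega) (by omega) (by omega) (by omega) (by omega)
      rw [hL, hH, hV, hD, pascal2 T j hj]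
      simp only [Nat.choose_self, one_mul, mul_one]
      ring
    · have hL : G 0 l m j
          = Nat.choose (l + m - 2 * j) (l - j) * Nat.choose (T + 1) j :=
        G_eq _ _ _ _ _ _ _ (by omega) (by omega) (by omega) (by omega) (by omega)
      have hH : G (1 - 0) (l - 1) m j
          = Nat.choose (l + m - 2 * j - 1) (l - j - 1) * Nat.choose T j :=
        G_eq _ _ _ _ _ _ _ (by omega) (by omega) (by omega) (by omega) (by omega)
      have hV : G (1 - 0) l (m - 1) j
          = Nat.choose (l + m - 2 * j - 1) (l - j) * Nat.choose T j :=
        G_eq _ _ _ _ _ _ _ (by omega) (by omega) (by omega) (by omega) (by omega)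
      have hD : G 0 (l - 1) (m - 1) (j - 1)
          = Nat.choose (l + m - 2 * j) (l - j) * Nat.choose T (j - 1) :=
        G_eq _ _ _ _ _ _ _ (by omega) (by omega) (by omega) (by omega) (by omega)
      rw [hL, hH, hV, hD, pascal2 T j hj,
        pascal1 (l + m - 2 * j) (l - j) (by omega) (by omega)]
      ring
  · rw [if_neg (show ¬((1:ℕ) = 0 ∧ 0 < l ∧ 0 < m ∧ 0 < j) by omega)]
    set U := (l + m - 1) / 2 with hU
    rcases Nat.eq_or_lt_of_le hjl with hl | hl <;> rcases Nat.eq_or_lt_of_le hjm with hm | hm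
    · have hL : G 1 l m j = Nat.choose 0 0 * Nat.choose U j :=
        G_eq _ _ _ _ _ _ _ (by omega) (by omega) (by omega) (by omega) (by omega)
      have hH : G (1 - 1) (l - 1) m j = 0 := G_zero (by omega)
      have hV : G (1 - 1) l (m - 1) j = 0 := G_zero (by omega)
      have hz : Nat.choose U j = 0 := Nat.choose_eq_zero_of_lt (by omega)
      rw [hL, hH, hV, hz]
      ring
    · have hL : G 1 l m j = Nat.choose (m - j) 0 * Nat.choose U j :=
        G_eq _ _ _ _ _ _ _ (by omega) (by omega) (by omega) (by omega) (by omega)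
      have hH : G (1 - 1) (l - 1) m j = 0 := G_zero (by omega)
      have hV : G (1 - 1) l (m - 1) j = Nat.choose (m - 1 - j) 0 * Nat.choose U j :=
        G_eq _ _ _ _ _ _ _ (by omega) (by omega) (by omega) (by omega) (by omega)
      rw [hL, hH, hV]
      simp only [Nat.choose_zero_right, one_mul, mul_one]
      ring
    · have hL : G 1 l m j = Nat.choose (l - j) (l - j) * Nat.choose U j :=
        G_eq _ _ _ _ _ _ _ (by omega) (by omega) (by omega) (by omega) (by omega)
      have hV : G (1 - 1) l (m - 1) j = 0 := G_zero (by omega)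
      have hH : G (1 - 1) (l - 1) m j
          = Nat.choose (l - 1 - j) (l - 1 - j) * Nat.choose U j :=
        G_eq _ _ _ _ _ _ _ (by omega) (by omega) (by omega) (by omega) (by omega)
      rw [hL, hH, hV]
      simp only [Nat.choose_self, one_mul, mul_one]
      ring
    · have hL : G 1 l m j
          = Nat.choose (l + m - 2 * j) (l - j) * Nat.choose U j :=
        G_eq _ _ _ _ _ _ _ (by omega) (by omega) (by omega) (by omega) (by omega)
      have hH : G (1 - 1) (l - 1) m j
          = Nat.choose (l + m - 2 * j - 1) (l - j - 1) * Nat.choose U j :=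
        G_eq _ _ _ _ _ _ _ (by omega) (by omega) (by omega) (by omega) (by omega)
      have hV : G (1 - 1) l (m - 1) j
          = Nat.choose (l + m - 2 * j - 1) (l - j) * Nat.choose U j :=
        G_eq _ _ _ _ _ _ _ (by omega) (by omega) (by omega) (by omega) (by omega)
      rw [hL, hH, hV, pascal1 (l + m - 2 * j) (l - j) (by omega) (by omega)]
      ring

lemma card_base (p : ℕ × ℕ) (j : ℕ) :
    Nat.card {L : List Step // ValidFrom p L ∧ endpt p L = (p.1 + 0, p.2 + 0)
        ∧ L.count Step.D = j} = G ((p.1 + p.2) % 2) 0 0 j := by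
  have hnil : ∀ L : List Step, endpt p L = (p.1 + 0, p.2 + 0) → L = [] := by
    intro L hL
    have hb := (endpt_bound L p).2.2
    rw [hL] at hb
    have hb2 : p.1 + p.2 + L.length ≤ p.1 + 0 + (p.2 + 0) := hb
    have : L.length = 0 := by omega
    exact List.length_eq_zero_iff.mp this
  rcases Nat.eq_zero_or_pos j with hj | hj
  · subst hj
    have h1 : Nonempty {L : List Step // ValidFrom p L ∧ endpt p L = (p.1 + 0, p.2 + 0)
        ∧ L.count Step.D = 0} := ⟨⟨[], trivial, by rw [endpt_nil]; simp, rfl⟩⟩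
    have h2 : Subsingleton {L : List Step // ValidFrom p L ∧ endpt p L = (p.1 + 0, p.2 + 0)
        ∧ L.count Step.D = 0} := by
      constructor
      rintro ⟨L1, _, e1, _⟩ ⟨L2, _, e2, _⟩
      exact Subtype.ext ((hnil L1 e1).trans (hnil L2 e2).symm)
    rw [Nat.card_unique, G_pos (le_refl 0) (le_refl 0)]
    simp
  · have : IsEmpty {L : List Step // ValidFrom p L ∧ endpt p L = (p.1 + 0, p.2 + 0)
        ∧ L.count Step.D = j} := by
      constructor
      rintro ⟨L, _, e1, e2⟩
      rw [hnil L e1] at e2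
      simp at e2
      omega
    rw [Nat.card_of_isEmpty, G_zero (Or.inl hj)]

lemma card_key : ∀ (N : ℕ) (p : ℕ × ℕ) (l m j : ℕ), l + m ≤ N →
    Nat.card {L : List Step // ValidFrom p L ∧ endpt p L = (p.1 + l, p.2 + m)
        ∧ L.count Step.D = j} = G ((p.1 + p.2) % 2) l m j := by
  intro N
  induction N with
  | zero =>
    intro p l m j h
    obtain rfl : l = 0 := by omega
    obtain rfl : m = 0 := by omega
    exact card_base p j
  | succ N ih =>
    intro p l m j h
    rcases Nat.eq_zero_or_pos (l + m) with h0 | h0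
    · obtain rfl : l = 0 := by omega
      obtain rfl : m = 0 := by omega
      exact card_base p j
    set e := (p.1 + p.2) % 2 with he
    have hlen : ∀ L : List Step,
        (ValidFrom p L ∧ endpt p L = (p.1 + l, p.2 + m) ∧ L.count Step.D = j) →
        L.length ≤ l + m := by
      rintro L ⟨-, h2, -⟩
      have hb := endpt_bound L p
      rw [h2] at hb
      simp at hb
      omega
    have hne : ∀ L : List Step,
        (ValidFrom p L ∧ endpt p L = (p.1 + l, p.2 + m) ∧ L.count Step.D = j) →
        L ≠ [] := by
      rintro L ⟨-, h2, -⟩ rfl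
      rw [endpt_nil] at h2
      have := congrArg Prod.fst h2
      have := congrArg Prod.snd h2
      simp at *
      omega
    rw [card_split (fun L => ValidFrom p L ∧ endpt p L = (p.1 + l, p.2 + m)
      ∧ L.count Step.D = j) (l + m) hlen hne]
    have cH : Nat.card {r : List Step // ValidFrom p (Step.H :: r)
        ∧ endpt p (Step.H :: r) = (p.1 + l, p.2 + m) ∧ (Step.H :: r).count Step.D = j}
        = (if 0 < l then G (1 - e) (l - 1) m j else 0) := by
      rcases Nat.eq_zero_or_pos l with hl | hl
      · rw [if_neg (by omega)]
        have : IsEmpty {r : List Step // ValidFrom p (Step.H :: r)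
            ∧ endpt p (Step.H :: r) = (p.1 + l, p.2 + m)
            ∧ (Step.H :: r).count Step.D = j} := by
          constructor
          rintro ⟨r, -, h2, -⟩
          have h2' : endpt (p.1 + 1, p.2) r = (p.1 + l, p.2 + m) := h2
          have hb := endpt_bound r (p.1 + 1, p.2)
          rw [h2'] at hb
          simp at hb
          omega
        exact Nat.card_of_isEmpty
      · rw [if_pos hl]
        have key : ∀ r : List Step,
            (ValidFrom p (Step.H :: r) ∧ endpt p (Step.H :: r) = (p.1 + l, p.2 + m)
              ∧ (Step.H :: r).count Step.D = j) ↔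
            (ValidFrom (p.1 + 1, p.2) r
              ∧ endpt (p.1 + 1, p.2) r = (p.1 + 1 + (l - 1), p.2 + m)
              ∧ r.count Step.D = j) := by
          intro r
          have hco : (p.1 + 1 + (l - 1), p.2 + m) = (p.1 + l, p.2 + m) := by
            congr 1; omega
          constructor
          · rintro ⟨⟨-, h1⟩, h2, h3⟩
            refine ⟨h1, ?_, ?_⟩
            · rw [hco]; exact h2
            · simpa [List.count_cons] using h3
          · rintro ⟨h1, h2, h3⟩
            refine ⟨⟨by simp, h1⟩, ?_, ?_⟩
            · show endpt (p.1 + 1, p.2) r = (p.1 + l, p.2 + m)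
              rw [← hco]; exact h2
            · simpa [List.count_cons] using h3
        rw [Nat.card_congr (Equiv.subtypeEquivRight key)]
        exact (ih (p.1 + 1, p.2) (l - 1) m j (by omega)).trans (by congr 1; omega)
    have cV : Nat.card {r : List Step // ValidFrom p (Step.V :: r)
        ∧ endpt p (Step.V :: r) = (p.1 + l, p.2 + m) ∧ (Step.V :: r).count Step.D = j}
        = (if 0 < m then G (1 - e) l (m - 1) j else 0) := by
      rcases Nat.eq_zero_or_pos m with hm | hm
      · rw [if_neg (by omega)]
        have : IsEmpty {r : List Step // ValidFrom p (Step.V :: r)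
            ∧ endpt p (Step.V :: r) = (p.1 + l, p.2 + m)
            ∧ (Step.V :: r).count Step.D = j} := by
          constructor
          rintro ⟨r, -, h2, -⟩
          have h2' : endpt (p.1, p.2 + 1) r = (p.1 + l, p.2 + m) := h2
          have hb := endpt_bound r (p.1, p.2 + 1)
          rw [h2'] at hb
          simp at hb
          omega
        exact Nat.card_of_isEmpty
      · rw [if_pos hm]
        have key : ∀ r : List Step,
            (ValidFrom p (Step.V :: r) ∧ endpt p (Step.V :: r) = (p.1 + l, p.2 + m)
              ∧ (Step.V :: r).count Step.D = j) ↔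
            (ValidFrom (p.1, p.2 + 1) r
              ∧ endpt (p.1, p.2 + 1) r = (p.1 + l, p.2 + 1 + (m - 1))
              ∧ r.count Step.D = j) := by
          intro r
          have hco : (p.1 + l, p.2 + 1 + (m - 1)) = (p.1 + l, p.2 + m) := by
            congr 1; omega
          constructor
          · rintro ⟨⟨-, h1⟩, h2, h3⟩
            refine ⟨h1, ?_, ?_⟩
            · rw [hco]; exact h2
            · simpa [List.count_cons] using h3
          · rintro ⟨h1, h2, h3⟩
            refine ⟨⟨by simp, h1⟩, ?_, ?_⟩
            · show endpt (p.1, p.2 + 1) r = (p.1 + l, p.2 + m)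
              rw [← hco]; exact h2
            · simpa [List.count_cons] using h3
        rw [Nat.card_congr (Equiv.subtypeEquivRight key)]
        exact (ih (p.1, p.2 + 1) l (m - 1) j (by omega)).trans (by congr 1; omega)
    have cD : Nat.card {r : List Step // ValidFrom p (Step.D :: r)
        ∧ endpt p (Step.D :: r) = (p.1 + l, p.2 + m) ∧ (Step.D :: r).count Step.D = j}
        = (if e = 0 ∧ 0 < l ∧ 0 < m ∧ 0 < j then G e (l - 1) (m - 1) (j - 1) else 0) := by
      by_cases hc : e = 0 ∧ 0 < l ∧ 0 < m ∧ 0 < j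
      · rw [if_pos hc]
        obtain ⟨he0, hl, hm, hj⟩ := hc
        have key : ∀ r : List Step,
            (ValidFrom p (Step.D :: r) ∧ endpt p (Step.D :: r) = (p.1 + l, p.2 + m)
              ∧ (Step.D :: r).count Step.D = j) ↔
            (ValidFrom (p.1 + 1, p.2 + 1) r
              ∧ endpt (p.1 + 1, p.2 + 1) r = (p.1 + 1 + (l - 1), p.2 + 1 + (m - 1))
              ∧ r.count Step.D = j - 1) := by
          intro r
          have hco : (p.1 + 1 + (l - 1), p.2 + 1 + (m - 1)) = (p.1 + l, p.2 + m) := by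
            congr 1 <;> omega
          constructor
          · rintro ⟨⟨-, h1⟩, h2, h3⟩
            refine ⟨h1, ?_, ?_⟩
            · rw [hco]; exact h2
            · have : r.count Step.D + 1 = j := by simpa [List.count_cons] using h3
              omega
          · rintro ⟨h1, h2, h3⟩
            refine ⟨⟨fun _ => by omega, h1⟩, ?_, ?_⟩
            · show endpt (p.1 + 1, p.2 + 1) r = (p.1 + l, p.2 + m)
              rw [← hco]; exact h2
            · simp [List.count_cons]
              omega
        rw [Nat.card_congr (Equiv.subtypeEquivRight key)]
        exact (ih (p.1 + 1, p.2 + 1) (l - 1) (m - 1) (j - 1) (by omega)).trans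
          (by congr 1; omega)
      · rw [if_neg hc]
        have : IsEmpty {r : List Step // ValidFrom p (Step.D :: r)
            ∧ endpt p (Step.D :: r) = (p.1 + l, p.2 + m)
            ∧ (Step.D :: r).count Step.D = j} := by
          constructor
          rintro ⟨r, ⟨hd, -⟩, h2, h3⟩
          have hdd : (p.1 + p.2) % 2 = 0 := hd rfl
          have h2' : endpt (p.1 + 1, p.2 + 1) r = (p.1 + l, p.2 + m) := h2
          have hb := endpt_bound r (p.1 + 1, p.2 + 1)
          rw [h2'] at hb
          simp at hb
          have h3' : r.count Step.D + 1 = j := by simpa [List.count_cons] using h3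
          exact hc ⟨by omega, by omega, by omega, by omega⟩
        exact Nat.card_of_isEmpty
    rw [cH, cV, cD]
    exact (G_rec e l m j (by omega) h0).symm

end StmtAux

/-- The number of valid paths from `(0,0)` to `(l,m)` containing exactly `j` diagonal
steps equals `C(l+m-2j, l-j) * C(⌊(l+m)/2⌋, j)`, with binomials with out-of-range
(negative) arguments being zero, as enforced by the guard. -/
theorem stmt_1 (l m j : ℕ) :
    Nat.card {L : List Step // ValidFrom (0, 0) L ∧ endpt (0, 0) L = (l, m)
        ∧ L.count Step.D = j}
      = if l < j ∨ m < j then 0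
        else Nat.choose (l + m - 2 * j) (l - j) * Nat.choose ((l + m) / 2) j := by
  have key : ∀ L : List Step,
      (ValidFrom (0, 0) L ∧ endpt (0, 0) L = (l, m) ∧ L.count Step.D = j) ↔
      (ValidFrom (0, 0) L
        ∧ endpt (0, 0) L = (((0, 0) : ℕ × ℕ).1 + l, ((0, 0) : ℕ × ℕ).2 + m)
        ∧ L.count Step.D = j) := by
    intro L
    simp
  rw [Nat.card_congr (Equiv.subtypeEquivRight key),
    StmtAux.card_key (l + m) (0, 0) l m j le_rfl]
  simp only [StmtAux.G]
  norm_num
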